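/- arXiv:2106.06453 — 5 statements merged into one kernel-verified Lean document; each statement's English description precedes it below -/
import Mathlib

section
/- Let m, t, k be positive integers with t ≥ 2 and k ≥ max(2, 2·log m / log(3/e)). Let r_1, …, r_k : {1,…,m} → {1,…,2t} be random functions such that for every subset S ⊆ {1,…,m} with |S| ≤ t, the random variables (r_i(x)) for i ∈ {1,…,k} and x ∈ S are mutually independent, each uniformly distributed on {1,…,2t}. Then with probability at least 1 − 4·(3/4)^k, it simultaneously holds for every nonempty subset T ⊆ {1,…,m} with |T| ≤ t that there exist x ∈ T and i ∈ {1,…,k} such that r_i(x) ≠ r_i(y) for all y ∈ T \ {x}. -/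
open MeasureTheory ProbabilityTheory Finset Real

/-!
If no `rᵢ` isolates a point of `T`, `|T| = s`, then every `rᵢ|T` takes each of its values at
least twice, so has at most `s/2` values; there are at most `C(2t, s/2) (s/2)^s ≤ (√e/2)^s (2t)^s`
such functions `T → [2t]`. By independence the bad event for `T` has probability at most
`((√e/2)^k)^s`, and a union bound over the `C(m, s) ≤ m^s` sets of each size `2 ≤ s ≤ t` gives
`∑ wˢ` with `w = m (√e/2)^k`. The hypothesis on `k` says exactly `m² ≤ (3/e)^k`, i.e.
`w² ≤ (3/4)^k ≤ 9/16`, and the geometric series is at most `w²/(1 - w) ≤ 4 w²`.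
-/

section Counting

variable (α V : Type*) [Fintype α] [DecidableEq α] [Fintype V] [DecidableEq V]

def noIsolated : Finset (α → V) := {f | ∀ x, ∃ y, y ≠ x ∧ f x = f y}

variable {α V}

lemma two_mul_card_image_le_of_mem_noIsolated {f : α → V} (hf : f ∈ noIsolated α V) :
    2 * #(univ.image f) ≤ Fintype.card α := by
  refine mul_card_image_le_card univ 2 fun b hb => ?_
  obtain ⟨x, -, rfl⟩ := mem_image.1 hb
  obtain ⟨y, hyx, hxy⟩ := (mem_filter.1 hf).2 x
  exact one_lt_card.2 ⟨x, by simp, y, by simp [hxy], hyx.symm⟩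

lemma card_noIsolated_le (hαV : Fintype.card α / 2 ≤ Fintype.card V) :
    #(noIsolated α V) ≤
      (Fintype.card V).choose (Fintype.card α / 2) * (Fintype.card α / 2) ^ Fintype.card α := by
  set h := Fintype.card α / 2
  have hcover : noIsolated α V ⊆
      (powersetCard h univ).biUnion fun J => Fintype.piFinset fun _ : α => J := by
    intro f hf
    have himage : #(univ.image f) ≤ h := by
      have := two_mul_card_image_le_of_mem_noIsolated hf
      omega
    obtain ⟨J, hfJ, -, hJ⟩ := exists_subsuperset_card_eq (subset_univ _) himage (by simpa)
    exact mem_biUnion.2 ⟨J, mem_powersetCard_univ.2 hJ,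
      Fintype.mem_piFinset.2 fun x => hfJ (mem_image_of_mem f (mem_univ x))⟩
  calc #(noIsolated α V)
      ≤ ∑ J ∈ powersetCard h univ, #(Fintype.piFinset fun _ : α => J) :=
        (card_le_card hcover).trans card_biUnion_le
    _ = (Fintype.card V).choose h * h ^ Fintype.card α := by
      rw [sum_congr rfl fun J hJ => by
        rw [Fintype.card_piFinset, prod_const, (mem_powersetCard_univ.1 hJ), card_univ]]
      simp

end Counting

lemma choose_half_mul_pow_le {N s : ℕ} (hsN : 2 * s ≤ N) :
    (N.choose (s / 2) : ℝ) * ((s / 2 : ℕ) : ℝ) ^ s ≤ (exp (1 / 2) / 2) ^ s * (N : ℝ) ^ s := by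
  set h := s / 2
  set a := s - h
  have hs : s = h + a := by omega
  have hh : (h : ℝ) ^ h / h.factorial ≤ exp h :=
    pow_div_factorial_le_exp (x := (h : ℝ)) (by positivity) h
  have h4 : (4 * h : ℝ) ≤ N := by exact_mod_cast (by omega : 4 * h ≤ N)
  have hexp : exp h ≤ exp (1 / 2) ^ s := by
    rw [← exp_nat_mul]
    gcongr
    have : ((2 * h : ℕ) : ℝ) ≤ s := by exact_mod_cast Nat.mul_div_le s 2
    push_cast at this
    linarith
  have hpow : (2 : ℝ) ^ s ≤ 4 ^ a := by
    rw [show (4 : ℝ) = 2 ^ 2 by norm_num, ← pow_mul]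
    exact pow_le_pow_right₀ (by norm_num) (by omega)
  calc (N.choose h : ℝ) * (h : ℝ) ^ s
      = (N.choose h : ℝ) * h ^ h * h ^ a := by rw [hs, pow_add, mul_assoc]
    _ ≤ (N : ℝ) ^ h / h.factorial * h ^ h * h ^ a := by
      gcongr
      exact Nat.choose_le_pow_div h N
    _ = (N : ℝ) ^ h * (h ^ h / h.factorial) * h ^ a := by ring
    _ ≤ (N : ℝ) ^ h * exp (1 / 2) ^ s * (N / 4) ^ a := by
      gcongr
      · exact hh.trans hexp
      · linarith
    _ = exp (1 / 2) ^ s / 4 ^ a * (N : ℝ) ^ s := by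
      rw [hs, div_pow]; ring
    _ ≤ exp (1 / 2) ^ s / 2 ^ s * (N : ℝ) ^ s := by gcongr
    _ = (exp (1 / 2) / 2) ^ s * (N : ℝ) ^ s := by rw [div_pow]

lemma card_noIsolated_le_pow {α V : Type*} [Fintype α] [DecidableEq α] [Fintype V]
    [DecidableEq V] (hαV : 2 * Fintype.card α ≤ Fintype.card V) :
    (#(noIsolated α V) : ℝ) ≤ ((exp (1 / 2) / 2) * Fintype.card V) ^ Fintype.card α := by
  rw [mul_pow]
  refine le_trans ?_ (choose_half_mul_pow_le hαV)
  exact_mod_cast card_noIsolated_le (by omega)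

lemma pow_le_pow_of_mul_log_div_log_le {x b : ℝ} (hx : 0 < x) (hb : 1 < b) {n k : ℕ}
    (h : n * log x / log b ≤ k) : x ^ n ≤ b ^ k := by
  have hlog : 0 < log b := log_pos hb
  rw [← log_le_log_iff (by positivity) (by positivity), log_pow, log_pow]
  rwa [div_le_iff₀ hlog] at h

lemma sum_Icc_two_pow_le_four_mul_sq {w : ℝ} (hw₀ : 0 ≤ w) (hw : w ≤ 3 / 4) (t : ℕ) :
    ∑ s ∈ Icc 2 t, w ^ s ≤ 4 * w ^ 2 := by
  calc ∑ s ∈ Icc 2 t, w ^ s = ∑ s ∈ Ico 2 (t + 1), w ^ s := rfl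
    _ ≤ w ^ 2 / (1 - w) := geom_sum_Ico_le_of_lt_one hw₀ (by linarith)
    _ ≤ 4 * w ^ 2 := by
      rw [div_le_iff₀ (by linarith)]
      nlinarith [sq_nonneg w]

lemma measureReal_forall_mem_le_of_iIndepFun {Ω ι κ V : Type*} [MeasurableSpace Ω]
    {μ : Measure Ω} [IsFiniteMeasure μ]
    [Fintype ι] [Fintype κ] [Fintype V] [MeasurableSpace V] [MeasurableSingletonClass V]
    {X : ι → κ → Ω → V} (hindep : iIndepFun (fun p : ι × κ => X p.1 p.2) μ)
    (hunif : ∀ i x c, μ.real {ω | X i x ω = c} = (Fintype.card V : ℝ)⁻¹) (B : Finset (κ → V)) :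
    μ.real {ω | ∀ i, (fun x => X i x ω) ∈ B} ≤
      (#B / Fintype.card V ^ Fintype.card κ : ℝ) ^ Fintype.card ι := by
  classical
  have hcover : {ω | ∀ i, (fun x => X i x ω) ∈ B} ⊆
      ⋃ g ∈ Fintype.piFinset fun _ : ι => B, ⋂ p : ι × κ, {ω | X p.1 p.2 ω = g p.1 p.2} :=
    fun ω hω => Set.mem_iUnion₂.2
      ⟨fun i x => X i x ω, Fintype.mem_piFinset.2 hω, Set.mem_iInter.2 fun _ => rfl⟩
  have hatom : ∀ g : ι → κ → V,
      μ.real (⋂ p : ι × κ, {ω | X p.1 p.2 ω = g p.1 p.2}) =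
        (Fintype.card V : ℝ)⁻¹ ^ (Fintype.card ι * Fintype.card κ) := by
    intro g
    rw [measureReal_def, hindep.meas_iInter (s := fun p => {ω | X p.1 p.2 ω = g p.1 p.2})
      fun p => ⟨{g p.1 p.2}, .singleton _, rfl⟩, ENNReal.toReal_prod]
    simp_rw [← measureReal_def, hunif]
    simp
  calc μ.real {ω | ∀ i, (fun x => X i x ω) ∈ B}
      ≤ ∑ g ∈ Fintype.piFinset fun _ : ι => B,
          μ.real (⋂ p : ι × κ, {ω | X p.1 p.2 ω = g p.1 p.2}) :=
        (measureReal_mono hcover (measure_ne_top _ _)).trans (measureReal_biUnion_finset_le _ _)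
    _ = (#B / Fintype.card V ^ Fintype.card κ : ℝ) ^ Fintype.card ι := by
      rw [sum_congr rfl fun g _ => hatom g, sum_const, Fintype.card_piFinset, prod_const,
        card_univ, nsmul_eq_mul, mul_comm, pow_mul, div_pow, div_eq_mul_inv, inv_pow]
      push_cast
      ring

lemma measureReal_forall_not_isolated_le {Ω ι α V : Type*} [MeasurableSpace Ω] {μ : Measure Ω}
    [IsFiniteMeasure μ] [Fintype ι] [DecidableEq α] [Fintype V] [DecidableEq V]
    [MeasurableSpace V] [MeasurableSingletonClass V] {r : ι → α → Ω → V} {T : Finset α}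
    (hTV : 2 * #T ≤ Fintype.card V) (hindep : iIndepFun (fun p : ι × T => r p.1 p.2) μ)
    (hunif : ∀ i x c, μ.real {ω | r i x ω = c} = (Fintype.card V : ℝ)⁻¹) :
    μ.real {ω | ∀ x ∈ T, ∀ i, ∃ y ∈ T, y ≠ x ∧ r i x ω = r i y ω} ≤
      ((exp (1 / 2) / 2) ^ Fintype.card ι) ^ #T := by
  have hsub : {ω | ∀ x ∈ T, ∀ i, ∃ y ∈ T, y ≠ x ∧ r i x ω = r i y ω} ⊆
      {ω | ∀ i, (fun x : T => r i x ω) ∈ noIsolated T V} := by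
    intro ω hω i
    refine mem_filter.2 ⟨mem_univ _, fun x => ?_⟩
    obtain ⟨y, hyT, hyx, hxy⟩ := hω x x.2 i
    exact ⟨⟨y, hyT⟩, fun h => hyx (congrArg Subtype.val h), hxy⟩
  have hcard : (#(noIsolated T V) / Fintype.card V ^ #T : ℝ) ≤ (exp (1 / 2) / 2) ^ #T := by
    refine div_le_of_le_mul₀ (by positivity) (by positivity) ?_
    rw [← mul_pow]
    simpa using card_noIsolated_le_pow (α := T) (V := V) (by simpa using hTV)
  calc μ.real {ω | ∀ x ∈ T, ∀ i, ∃ y ∈ T, y ≠ x ∧ r i x ω = r i y ω}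
      ≤ (#(noIsolated T V) / Fintype.card V ^ Fintype.card T : ℝ) ^ Fintype.card ι :=
        (measureReal_mono hsub (measure_ne_top _ _)).trans
          (measureReal_forall_mem_le_of_iIndepFun (X := fun i (x : T) => r i x) hindep
            (fun i x => hunif i x) _)
    _ ≤ ((exp (1 / 2) / 2) ^ #T) ^ Fintype.card ι := by
      rw [Fintype.card_coe]
      gcongr
    _ = ((exp (1 / 2) / 2) ^ Fintype.card ι) ^ #T := by rw [← pow_mul, mul_comm, pow_mul]

lemma measureReal_exists_not_isolated_le {Ω ι α V : Type*} [MeasurableSpace Ω] {μ : Measure Ω}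
    [IsFiniteMeasure μ] [Fintype ι] [Nonempty ι] [Fintype α] [DecidableEq α] [Fintype V]
    [DecidableEq V] [MeasurableSpace V] [MeasurableSingletonClass V] {r : ι → α → Ω → V}
    {t : ℕ} (htV : 2 * t ≤ Fintype.card V)
    (hindep : ∀ T : Finset α, #T ≤ t → iIndepFun (fun p : ι × T => r p.1 p.2) μ)
    (hunif : ∀ i x c, μ.real {ω | r i x ω = c} = (Fintype.card V : ℝ)⁻¹) :
    μ.real {ω | ∃ T : Finset α, T.Nonempty ∧ #T ≤ t ∧
        ∀ x ∈ T, ∀ i, ∃ y ∈ T, y ≠ x ∧ r i x ω = r i y ω} ≤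
      ∑ s ∈ Icc 2 t, (Fintype.card α * (exp (1 / 2) / 2) ^ Fintype.card ι) ^ s := by
  set bad : Finset α → Set Ω := fun T => {ω | ∀ x ∈ T, ∀ i, ∃ y ∈ T, y ≠ x ∧ r i x ω = r i y ω}
  have hcover : {ω | ∃ T : Finset α, T.Nonempty ∧ #T ≤ t ∧ ω ∈ bad T} ⊆
      ⋃ s ∈ Icc 2 t, ⋃ T ∈ powersetCard s univ, bad T := by
    rintro ω ⟨T, ⟨x, hx⟩, hTt, hω⟩
    obtain ⟨y, hy, hyx, -⟩ := hω x hx (Classical.arbitrary ι)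
    have hT2 : 2 ≤ #T := one_lt_card.2 ⟨y, hy, x, hx, hyx⟩
    exact Set.mem_iUnion₂.2 ⟨#T, mem_Icc.2 ⟨hT2, hTt⟩,
      Set.mem_iUnion₂.2 ⟨T, mem_powersetCard_univ.2 rfl, hω⟩⟩
  calc μ.real {ω | ∃ T : Finset α, T.Nonempty ∧ #T ≤ t ∧ ω ∈ bad T}
      ≤ ∑ s ∈ Icc 2 t, ∑ T ∈ powersetCard s univ, μ.real (bad T) :=
        (measureReal_mono hcover (measure_ne_top _ _)).trans <|
          (measureReal_biUnion_finset_le _ _).trans <|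
            sum_le_sum fun s _ => measureReal_biUnion_finset_le _ _
    _ ≤ ∑ s ∈ Icc 2 t, ∑ _T ∈ powersetCard s (univ : Finset α),
          ((exp (1 / 2) / 2) ^ Fintype.card ι) ^ s := by
      refine sum_le_sum fun s hs => sum_le_sum fun T hT => ?_
      rw [← (mem_powersetCard_univ.1 hT)]
      have hTt : #T ≤ t := (mem_powersetCard_univ.1 hT).trans_le (mem_Icc.1 hs).2
      exact measureReal_forall_not_isolated_le (by omega) (hindep T hTt) hunif
    _ ≤ ∑ s ∈ Icc 2 t, (Fintype.card α * (exp (1 / 2) / 2) ^ Fintype.card ι) ^ s := by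
      refine sum_le_sum fun s _ => ?_
      rw [sum_const, card_powersetCard, card_univ, nsmul_eq_mul, mul_pow]
      gcongr
      exact_mod_cast Nat.choose_le_pow _ _

/-- With probability at least `1 - 4·(3/4)^k` over the choice of the
`k` (t-wise independent, uniform) random hash functions `rᵢ : [m] → [2t]`, every
nonempty subset `T ⊆ [m]` with `|T| ≤ t` contains an element `x` that is isolated
under some `rᵢ`. -/
theorem stmt0 (m t k : ℕ) (hm : 0 < m) (ht : 2 ≤ t)
    (hk : (k : ℝ) ≥ max 2 (2 * Real.log m / Real.log (3 / Real.exp 1)))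
    {Ω : Type*} [MeasurableSpace Ω] (μ : Measure Ω) [IsProbabilityMeasure μ]
    (r : Fin k → Fin m → Ω → Fin (2 * t))
    (hindep : ∀ S : Finset (Fin m), S.card ≤ t →
      iIndepFun
        (fun p : Fin k × {x : Fin m // x ∈ S} => fun ω => r p.1 p.2.1 ω) μ)
    (hunif : ∀ S : Finset (Fin m), S.card ≤ t → ∀ (i : Fin k), ∀ x ∈ S,
      ∀ c : Fin (2 * t), μ {ω | r i x ω = c} = 1 / (2 * t)) :
    (1 : ℝ) - 4 * (3 / 4) ^ k ≤
      (μ {ω | ∀ T : Finset (Fin m), T.Nonempty → T.card ≤ t →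
        ∃ x ∈ T, ∃ i : Fin k, ∀ y ∈ T, y ≠ x → r i x ω ≠ r i y ω}).toReal := by
  have hk2 : 2 ≤ k := by exact_mod_cast (le_max_left _ _).trans hk
  have : Nonempty (Fin k) := ⟨⟨0, by omega⟩⟩
  set w : ℝ := m * (exp (1 / 2) / 2) ^ k
  have hm2 : (m : ℝ) ^ 2 ≤ (3 / exp 1) ^ k :=
    pow_le_pow_of_mul_log_div_log_le (by positivity)
      ((one_lt_div (exp_pos 1)).2 exp_one_lt_three)
      (by exact_mod_cast (le_max_right _ _).trans hk)
  have hw2 : w ^ 2 ≤ (3 / 4) ^ k := by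
    calc w ^ 2 = (m : ℝ) ^ 2 * (exp 1 / 4) ^ k := by
          rw [mul_pow, ← pow_mul, mul_comm k, pow_mul, div_pow, ← exp_nat_mul]
          norm_num
      _ ≤ (3 / exp 1) ^ k * (exp 1 / 4) ^ k := by gcongr
      _ = (3 / 4) ^ k := by rw [← mul_pow]; field_simp
  have hw : w ≤ 3 / 4 := by
    refine le_of_pow_le_pow_left₀ two_ne_zero (by norm_num) (hw2.trans ?_)
    exact pow_le_pow_of_le_one (by norm_num) (by norm_num) hk2
  have hbad := measureReal_exists_not_isolated_le (μ := μ) (r := r) (t := t) (by simp) hindep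
    fun i x c => by
      simp [measureReal_def, hunif {x} (by simp; omega) i x (mem_singleton_self x) c]
  set A := {ω | ∀ T : Finset (Fin m), T.Nonempty → T.card ≤ t →
        ∃ x ∈ T, ∃ i : Fin k, ∀ y ∈ T, y ≠ x → r i x ω ≠ r i y ω}
  have hAc : Aᶜ = {ω | ∃ T : Finset (Fin m), T.Nonempty ∧ #T ≤ t ∧
      ∀ x ∈ T, ∀ i, ∃ y ∈ T, y ≠ x ∧ r i x ω = r i y ω} := by
    ext ω; simp [A]
  have hsplit : 1 ≤ μ.real A + μ.real Aᶜ := by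
    simpa [probReal_univ] using measureReal_union_le (μ := μ) A Aᶜ
  rw [hAc] at hsplit
  simp only [Fintype.card_fin] at hbad
  rw [← measureReal_def]
  linarith [sum_Icc_two_pow_le_four_mul_sq (by positivity) hw t]
end

section
/- Let m, t, k be positive integers. Let r_1, …, r_k : {1,…,m} → {1,…,2t} be random functions such that for every subset S ⊆ {1,…,m} with |S| ≤ t, the random variables (r_i(x)) for i ∈ {1,…,k} and x ∈ S are mutually independent, each uniformly distributed on {1,…,2t}. Let E denote the event that there exists a subset T ⊆ {1,…,m} with 2 ≤ |T| ≤ t such that for every x ∈ T and every i ∈ {1,…,k} there is some y ∈ T \ {x} with r_i(x) = r_i(y). Then Pr[E] ≤ Σ_{j=2}^{t} C(m,j) · C(2t, ⌊j/2⌋)^k · (⌊j/2⌋/(2t))^{j·k}, where C(a,b) denotes the binomial coefficient. -/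
/-!
If no element of `T` is alone in its bucket under `r i`, then `r i` maps `T` onto at most `|T|/2`
buckets, hence into one of the `C(2t, |T|/2)` sets of `|T|/2` buckets. For fixed such sets
`V_1, …, V_k`, the `|T| k` values `r i x` (`x ∈ T`) are independent and uniform, so they all land
in their `V_i` with probability `(|T|/2 / 2t) ^ (|T| k)`. A union bound over the `V_i` and over
the sets `T`, grouped by size, gives the sum.
-/

open MeasureTheory ProbabilityTheory Finset
open scoped ENNReal

def NoSingletonBucket {κ α β : Type*} (h : κ → α → β) (T : Finset α) : Prop :=
  ∀ x ∈ T, ∀ i, ∃ y ∈ T, y ≠ x ∧ h i x = h i y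

/-- Each fibre of `g` over `g '' T` has at least two points. -/
lemma Finset.card_image_le_card_div_two {α β : Type*} [DecidableEq β] {T : Finset α} {g : α → β}
    (h : ∀ x ∈ T, ∃ y ∈ T, y ≠ x ∧ g x = g y) : #(T.image g) ≤ #T / 2 := by
  rw [Nat.le_div_iff_mul_le two_pos]
  calc #(T.image g) * 2 = ∑ _v ∈ T.image g, 2 := by rw [sum_const, smul_eq_mul]
    _ ≤ ∑ v ∈ T.image g, #{a ∈ T | g a = v} := by
        refine sum_le_sum fun v hv => ?_
        obtain ⟨x, hx, rfl⟩ := mem_image.1 hv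
        obtain ⟨y, hy, hyx, hxy⟩ := h x hx
        exact one_lt_card.2 ⟨x, mem_filter.2 ⟨hx, rfl⟩, y, mem_filter.2 ⟨hy, hxy.symm⟩, hyx.symm⟩
    _ = #T := (card_eq_sum_card_image g T).symm

lemma NoSingletonBucket.exists_buckets {κ α β : Type*} [Fintype β] [DecidableEq β]
    {h : κ → α → β} {T : Finset α} (hT : #T / 2 ≤ Fintype.card β) (hh : NoSingletonBucket h T) :
    ∃ V : κ → Finset β, (∀ i, #(V i) = #T / 2) ∧ ∀ i, ∀ x ∈ T, h i x ∈ V i := by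
  have : ∀ i, ∃ V : Finset β, T.image (h i) ⊆ V ∧ #V = #T / 2 := fun i => by
    obtain ⟨V, hsub, -, hcard⟩ := exists_subsuperset_card_eq (subset_univ (T.image (h i)))
      (card_image_le_card_div_two fun x hx => hh x hx i) (by simpa using hT)
    exact ⟨V, hsub, hcard⟩
  choose V hsub hcard using this
  exact ⟨V, hcard, fun i x hx => hsub i (mem_image_of_mem _ hx)⟩

section Measure

variable {Ω β : Type*} [MeasurableSpace Ω] {μ : Measure Ω}

lemma measure_mem_finset_le {X : Ω → β} {q : ℝ≥0∞} (hX : ∀ c, μ {ω | X ω = c} = q)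
    (V : Finset β) : μ {ω | X ω ∈ V} ≤ #V * q :=
  calc μ {ω | X ω ∈ V} = μ (⋃ c ∈ V, {ω | X ω = c}) := by congr 1; ext; simp
    _ ≤ ∑ c ∈ V, μ {ω | X ω = c} := measure_biUnion_finset_le _ _
    _ = #V * q := by simp [hX]

variable [MeasurableSpace β] [MeasurableSingletonClass β]

lemma ProbabilityTheory.iIndepFun.measure_iInter_mem_finset_le {ι : Type*} [Fintype ι]
    {X : ι → Ω → β} {q : ℝ≥0∞} (hindep : iIndepFun X μ) (hX : ∀ p c, μ {ω | X p ω = c} = q)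
    (V : ι → Finset β) : μ (⋂ p, {ω | X p ω ∈ V p}) ≤ ∏ p, #(V p) * q := by
  change μ (⋂ p, X p ⁻¹' V p) ≤ _
  rw [hindep.meas_iInter fun p => ⟨V p, (V p).measurableSet, rfl⟩]
  exact prod_le_prod' fun p _ => measure_mem_finset_le (hX p) (V p)

theorem measure_noSingletonBucket_le {κ α : Type*} [Fintype κ] [DecidableEq κ] [Fintype β]
    [DecidableEq β]
    {r : κ → α → Ω → β} {T : Finset α} {q : ℝ≥0∞}
    (hindep : iIndepFun (fun p : κ × T => r p.1 p.2) μ)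
    (hunif : ∀ i, ∀ x ∈ T, ∀ c, μ {ω | r i x ω = c} = q) (hT : #T / 2 ≤ Fintype.card β) :
    μ {ω | NoSingletonBucket (fun i x => r i x ω) T} ≤
      ((Fintype.card β).choose (#T / 2) : ℝ≥0∞) ^ Fintype.card κ *
        ((#T / 2 : ℕ) * q) ^ (#T * Fintype.card κ) := by
  set 𝒱 := Fintype.piFinset fun _ : κ => (univ : Finset β).powersetCard (#T / 2)
  have hcover : {ω | NoSingletonBucket (fun i x => r i x ω) T} ⊆
      ⋃ V ∈ 𝒱, ⋂ p : κ × T, {ω | r p.1 p.2 ω ∈ V p.1} := fun ω hω => by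
    obtain ⟨V, hcard, hmem⟩ := hω.exists_buckets hT
    exact Set.mem_iUnion₂.2 ⟨V, Fintype.mem_piFinset.2 fun i => by simp [hcard],
      Set.mem_iInter.2 fun p => hmem p.1 p.2 p.2.2⟩
  have hbox : ∀ V ∈ 𝒱, μ (⋂ p : κ × T, {ω | r p.1 p.2 ω ∈ V p.1}) ≤
      ((#T / 2 : ℕ) * q) ^ (#T * Fintype.card κ) := fun V hV => by
    have hcard : ∀ i, #(V i) = #T / 2 := fun i =>
      (mem_powersetCard.1 (Fintype.mem_piFinset.1 hV i)).2
    calc _ ≤ ∏ p : κ × T, #(V p.1) * q :=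
          hindep.measure_iInter_mem_finset_le (fun p => hunif p.1 p.2 p.2.2) (V ·.1)
      _ = _ := by simp [hcard, mul_comm (#T)]
  calc _ ≤ ∑ V ∈ 𝒱, μ (⋂ p : κ × T, {ω | r p.1 p.2 ω ∈ V p.1}) :=
        (measure_mono hcover).trans (measure_biUnion_finset_le _ _)
    _ ≤ ∑ _V ∈ 𝒱, ((#T / 2 : ℕ) * q) ^ (#T * Fintype.card κ) := sum_le_sum hbox
    _ = _ := by simp [𝒱, Fintype.card_piFinset]

end Measure

lemma Finset.sum_filter_card_mem {α M : Type*} [Fintype α] [AddCommMonoid M] (s : Finset ℕ)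
    (f : ℕ → M) :
    ∑ T ∈ univ.filter (fun T : Finset α => #T ∈ s), f #T =
      ∑ j ∈ s, (Fintype.card α).choose j • f j := by
  rw [← sum_fiberwise_of_maps_to' (g := card) (t := s) (fun T hT => (mem_filter.1 hT).2)]
  refine sum_congr rfl fun j hj => ?_
  have : (univ.filter fun T : Finset α => #T ∈ s).filter (#· = j) = univ.powersetCard j := by
    ext T; simp only [mem_filter, mem_univ, true_and, mem_powersetCard, subset_univ]
    exact ⟨And.right, fun h => ⟨h ▸ hj, h⟩⟩
  rw [this, sum_const, card_powersetCard, card_univ]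

theorem stmt2_general (m t k : ℕ)
    {Ω : Type*} [MeasurableSpace Ω] (μ : Measure Ω) [IsProbabilityMeasure μ]
    (r : Fin k → Fin m → Ω → Fin (2 * t))
    (hindep : ∀ S : Finset (Fin m), S.card ≤ t →
      iIndepFun
        (fun p : Fin k × {x : Fin m // x ∈ S} => fun ω => r p.1 p.2.1 ω) μ)
    (hunif : ∀ S : Finset (Fin m), S.card ≤ t → ∀ (i : Fin k), ∀ x ∈ S,
      ∀ c : Fin (2 * t), μ {ω | r i x ω = c} = 1 / (2 * t)) :
    (μ {ω | ∃ T : Finset (Fin m), 2 ≤ T.card ∧ T.card ≤ t ∧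
        ∀ x ∈ T, ∀ i : Fin k, ∃ y ∈ T, y ≠ x ∧ r i x ω = r i y ω}).toReal ≤
      ∑ j ∈ Finset.Icc 2 t, (m.choose j : ℝ) * ((2 * t).choose (j / 2) : ℝ) ^ k *
        (((j / 2 : ℕ) : ℝ) / (2 * t)) ^ (j * k) := by
  classical
  set bound : ℕ → ℝ≥0∞ := fun j =>
    ((2 * t).choose (j / 2) : ℝ≥0∞) ^ k * ((j / 2 : ℕ) * (1 / (2 * t))) ^ (j * k)
  have hE : μ {ω | ∃ T : Finset (Fin m), 2 ≤ T.card ∧ T.card ≤ t ∧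
      ∀ x ∈ T, ∀ i : Fin k, ∃ y ∈ T, y ≠ x ∧ r i x ω = r i y ω} ≤
      ∑ j ∈ Icc 2 t, m.choose j • bound j :=
    calc _ ≤ ∑ T ∈ univ.filter (fun T : Finset (Fin m) => #T ∈ Icc 2 t),
          μ {ω | NoSingletonBucket (fun i x => r i x ω) T} := by
          refine (measure_mono fun ω hω => ?_).trans (measure_biUnion_finset_le _ _)
          obtain ⟨T, h2, ht, hT⟩ := hω
          exact Set.mem_iUnion₂.2 ⟨T, by simp [h2, ht], hT⟩
      _ ≤ ∑ T ∈ univ.filter (fun T : Finset (Fin m) => #T ∈ Icc 2 t), bound #T := by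
          refine sum_le_sum fun T hT => ?_
          have ht : #T ≤ t := (mem_Icc.1 (mem_filter.1 hT).2).2
          have := measure_noSingletonBucket_le (hindep T ht) (hunif T ht) (by simp; omega)
          rwa [Fintype.card_fin, Fintype.card_fin] at this
      _ = _ := by simpa using sum_filter_card_mem (α := Fin m) (Icc 2 t) bound
  have hfinite : ∀ j ∈ Icc 2 t, m.choose j • bound j ≠ ∞ := fun j hj => by
    have ht : (t : ℝ≥0∞) ≠ 0 := Nat.cast_ne_zero.2 (by simp only [mem_Icc] at hj; omega)
    simp [bound, ENNReal.mul_eq_top, ht]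
  refine (ENNReal.toReal_mono (ENNReal.sum_ne_top.2 hfinite) hE).trans_eq ?_
  rw [ENNReal.toReal_sum hfinite]
  refine sum_congr rfl fun j _ => ?_
  simp only [bound, mul_one_div, nsmul_eq_mul, ENNReal.toReal_mul, ENNReal.toReal_pow,
    ENNReal.toReal_div, ENNReal.toReal_natCast, ENNReal.toReal_ofNat, mul_assoc]

/-- The probability of the event `E` (some subset `T` with
`2 ≤ |T| ≤ t` has no isolated element under any of the `k` hash functions)
is bounded by `Σ_{j=2}^{t} C(m,j) · C(2t,⌊j/2⌋)^k · (⌊j/2⌋/(2t))^{j·k}`. -/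
theorem stmt2 (m t k : ℕ) (hm : 0 < m) (ht : 0 < t) (hk : 0 < k)
    {Ω : Type*} [MeasurableSpace Ω] (μ : Measure Ω) [IsProbabilityMeasure μ]
    (r : Fin k → Fin m → Ω → Fin (2 * t))
    (hindep : ∀ S : Finset (Fin m), S.card ≤ t →
      iIndepFun
        (fun p : Fin k × {x : Fin m // x ∈ S} => fun ω => r p.1 p.2.1 ω) μ)
    (hunif : ∀ S : Finset (Fin m), S.card ≤ t → ∀ (i : Fin k), ∀ x ∈ S,
      ∀ c : Fin (2 * t), μ {ω | r i x ω = c} = 1 / (2 * t)) :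
    (μ {ω | ∃ T : Finset (Fin m), 2 ≤ T.card ∧ T.card ≤ t ∧
        ∀ x ∈ T, ∀ i : Fin k, ∃ y ∈ T, y ≠ x ∧ r i x ω = r i y ω}).toReal ≤
      ∑ j ∈ Finset.Icc 2 t, (m.choose j : ℝ) * ((2 * t).choose (j / 2) : ℝ) ^ k *
        (((j / 2 : ℕ) : ℝ) / (2 * t)) ^ (j * k) :=
  stmt2_general m t k μ r hindep hunif
end

section
/- Let t, k be positive integers and let T be a finite set with 2 ≤ |T| = j ≤ t. Let (r_i(x)) for i ∈ {1,…,k} and x ∈ T be mutually independent random variables, each uniformly distributed on {1,…,2t}. Then the probability that for every x ∈ T and every i ∈ {1,…,k} there exists y ∈ T \ {x} with r_i(x) = r_i(y) is at most C(2t, ⌊j/2⌋)^k · (⌊j/2⌋/(2t))^{j·k}, where C(a,b) denotes the binomial coefficient. -/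
open MeasureTheory ProbabilityTheory Finset ENNReal

/-! If no `x ∈ T` is isolated under `rᵢ`, every fibre of `rᵢ` has at least two points, so the
image of `rᵢ` is contained in some `⌊j/2⌋`-subset `Sᵢ` of `{1,…,2t}`. For fixed `(Sᵢ)ᵢ`, by
independence the probability that `rᵢ(x) ∈ Sᵢ` for all `i, x` is at most `(⌊j/2⌋/(2t))^{jk}`,
and a union bound over the `C(2t, ⌊j/2⌋)^k` choices of `(Sᵢ)ᵢ` finishes the proof. -/

section Combinatorics

variable {α β : Type*} [Fintype α] [DecidableEq β] {f : α → β}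

theorem two_mul_card_image_le_of_forall_exists_ne (hf : ∀ x, ∃ y, y ≠ x ∧ f x = f y) :
    2 * #(univ.image f) ≤ Fintype.card α := by
  refine mul_card_image_le_card univ 2 fun b hb => ?_
  obtain ⟨x, -, rfl⟩ := mem_image.1 hb
  obtain ⟨y, hyx, hxy⟩ := hf x
  exact one_lt_card.2 ⟨x, by simp, y, by simp [hxy], hyx.symm⟩

theorem exists_card_eq_half_forall_mem_of_forall_exists_ne [Fintype β]
    (hf : ∀ x, ∃ y, y ≠ x ∧ f x = f y) (hαβ : Fintype.card α / 2 ≤ Fintype.card β) :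
    ∃ s : Finset β, #s = Fintype.card α / 2 ∧ ∀ x, f x ∈ s := by
  have himage := two_mul_card_image_le_of_forall_exists_ne hf
  obtain ⟨s, hfs, -, hs⟩ := exists_subsuperset_card_eq (subset_univ (univ.image f))
    (n := Fintype.card α / 2) (by omega) (by simpa using hαβ)
  exact ⟨s, hs, fun x => hfs (mem_image_of_mem f (mem_univ x))⟩

end Combinatorics

section Probability

variable {Ω β : Type*} [MeasurableSpace Ω] {μ : Measure Ω} {p : ℝ≥0∞}

theorem measure_preimage_finset_le {X : Ω → β} (hX : ∀ c, μ {ω | X ω = c} ≤ p)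
    (S : Finset β) : μ (X ⁻¹' S) ≤ #S * p := by
  have hS : X ⁻¹' S = ⋃ c ∈ S, {ω | X ω = c} := by ext; simp
  calc μ (X ⁻¹' S) ≤ ∑ c ∈ S, μ {ω | X ω = c} := hS ▸ measure_biUnion_finset_le _ _
    _ ≤ #S * p := by simpa using sum_le_card_nsmul S _ p fun c _ => hX c

theorem ProbabilityTheory.iIndepFun.measure_forall_mem_le {ι : Type*} [Fintype ι]
    [MeasurableSpace β] [MeasurableSingletonClass β] {X : ι → Ω → β} (hX : iIndepFun X μ)
    (hp : ∀ i c, μ {ω | X i ω = c} ≤ p)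
    {m : ℕ} {S : ι → Finset β} (hS : ∀ i, #(S i) ≤ m) :
    μ {ω | ∀ i, X i ω ∈ S i} ≤ (m * p) ^ Fintype.card ι := by
  have hinter : {ω | ∀ i, X i ω ∈ S i} = ⋂ i ∈ (univ : Finset ι), X i ⁻¹' S i := by
    ext; simp
  rw [hinter, hX.meas_biInter fun i _ => ⟨S i, (S i).measurableSet, rfl⟩, ← card_univ,
    ← prod_const]
  refine prod_le_prod' fun i _ => (measure_preimage_finset_le (hp i) _).trans ?_
  gcongr
  exact hS i

end Probability

theorem measure_forall_exists_ne_eq_le {Ω κ T β : Type*} [MeasurableSpace Ω] {μ : Measure Ω}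
    [Fintype κ] [Fintype T] [Fintype β] [DecidableEq β] [MeasurableSpace β]
    [MeasurableSingletonClass β] {r : κ → T → Ω → β}
    (hindep : iIndepFun (fun q : κ × T => r q.1 q.2) μ) {p : ℝ≥0∞}
    (hp : ∀ i x c, μ {ω | r i x ω = c} ≤ p) (hT : Fintype.card T / 2 ≤ Fintype.card β) :
    μ {ω | ∀ x i, ∃ y, y ≠ x ∧ r i x ω = r i y ω} ≤
      (Fintype.card β).choose (Fintype.card T / 2) ^ Fintype.card κ *
        (((Fintype.card T / 2 : ℕ) : ℝ≥0∞) * p) ^ (Fintype.card T * Fintype.card κ) := by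
  classical
  set m := Fintype.card T / 2
  let A := Fintype.piFinset fun _ : κ => powersetCard m (univ : Finset β)
  have hcover : {ω | ∀ x i, ∃ y, y ≠ x ∧ r i x ω = r i y ω} ⊆
      ⋃ S ∈ A, {ω | ∀ q : κ × T, r q.1 q.2 ω ∈ S q.1} := by
    intro ω hω
    choose S hSm hS using fun i =>
      exists_card_eq_half_forall_mem_of_forall_exists_ne (fun x => hω x i) hT
    simp only [Set.mem_iUnion]
    exact ⟨S, by simp [A, m, hSm], fun q => hS q.1 q.2⟩
  calc μ _ ≤ μ (⋃ S ∈ A, {ω | ∀ q : κ × T, r q.1 q.2 ω ∈ S q.1}) := measure_mono hcover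
    _ ≤ ∑ S ∈ A, μ {ω | ∀ q : κ × T, r q.1 q.2 ω ∈ S q.1} := measure_biUnion_finset_le _ _
    _ ≤ ∑ S ∈ A, ((m : ℝ≥0∞) * p) ^ Fintype.card (κ × T) := by
      refine sum_le_sum fun S hS => hindep.measure_forall_mem_le (fun q => hp q.1 q.2) ?_
      simp_all [A]
    _ = _ := by simp [A, Fintype.card_piFinset, card_powersetCard, mul_comm]

theorem stmt3_general (t k j : ℕ) (ht : 0 < t)
    (T : Type*) [Fintype T] (hTj : Fintype.card T = j)
    (hjt : j ≤ t)
    {Ω : Type*} [MeasurableSpace Ω] (μ : Measure Ω)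
    (r : Fin k → T → Ω → Fin (2 * t))
    (hindep : iIndepFun
      (fun p : Fin k × T => fun ω => r p.1 p.2 ω) μ)
    (hunif : ∀ (i : Fin k) (x : T) (c : Fin (2 * t)),
      μ {ω | r i x ω = c} = 1 / (2 * t)) :
    (μ {ω | ∀ (x : T) (i : Fin k), ∃ y : T, y ≠ x ∧ r i x ω = r i y ω}).toReal ≤
      ((2 * t).choose (j / 2) : ℝ) ^ k * (((j / 2 : ℕ) : ℝ) / (2 * t)) ^ (j * k) := by
  have hbound := measure_forall_exists_ne_eq_le hindep (fun i x c => (hunif i x c).le)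
    (by simp only [hTj, Fintype.card_fin]; omega)
  simp only [hTj, Fintype.card_fin, mul_one_div] at hbound
  refine (ENNReal.toReal_mono ?_ hbound).trans_eq ?_
  · finiteness
  · simp [ENNReal.toReal_div]

/-- For a finite set `T` with `2 ≤ |T| = j ≤ t` and mutually
independent uniform random variables `rᵢ(x)` on `{1,…,2t}`, the probability that
no element of `T` is isolated under any `rᵢ` is at most
`C(2t,⌊j/2⌋)^k · (⌊j/2⌋/(2t))^{j·k}`. -/
theorem stmt3 (t k j : ℕ) (ht : 0 < t) (hk : 0 < k)
    (T : Type*) [Fintype T] (hT2 : 2 ≤ Fintype.card T) (hTj : Fintype.card T = j)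
    (hjt : j ≤ t)
    {Ω : Type*} [MeasurableSpace Ω] (μ : Measure Ω) [IsProbabilityMeasure μ]
    (r : Fin k → T → Ω → Fin (2 * t))
    (hindep : iIndepFun
      (fun p : Fin k × T => fun ω => r p.1 p.2 ω) μ)
    (hunif : ∀ (i : Fin k) (x : T) (c : Fin (2 * t)),
      μ {ω | r i x ω = c} = 1 / (2 * t)) :
    (μ {ω | ∀ (x : T) (i : Fin k), ∃ y : T, y ≠ x ∧ r i x ω = r i y ω}).toReal ≤
      ((2 * t).choose (j / 2) : ℝ) ^ k * (((j / 2 : ℕ) : ℝ) / (2 * t)) ^ (j * k) :=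
  stmt3_general t k j ht T hTj hjt μ r hindep hunif
end

section
/- Let m, t, k be integers with m ≥ 1, t ≥ 2, k ≥ 2, and (e/3)^{k/2} ≤ 1/m (equivalently k ≥ 2·log m / log(3/e)). Then Σ_{j=2}^{t} m^j · (e·j/(4t))^{j·k/2} ≤ 4 · (3/4)^k, where e is Euler's number and the powers are real powers. -/
/-!
Since `j ≤ t`, the `j`-th term is at most `(m (e/4)^{k/2})^j`, and the hypothesis, applied to
`e/4 = (e/3)·(3/4)`, bounds `m (e/4)^{k/2}` by `r = (3/4)^{k/2}`. As `k ≥ 2` we have `r ≤ 3/4`,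
so the geometric tail is `∑_{j ≥ 2} r^j ≤ r²/(1 - r) ≤ 4r² = 4 (3/4)^k`.
-/

open Real Finset

lemma sum_Icc_two_pow_le_four_mul_sq_s5 {r : ℝ} (h0 : 0 ≤ r) (h1 : r ≤ 3 / 4) (t : ℕ) :
    ∑ j ∈ Icc 2 t, r ^ j ≤ 4 * r ^ 2 := by
  rw [← Ico_add_one_right_eq_Icc]
  calc ∑ j ∈ Ico 2 (t + 1), r ^ j ≤ r ^ 2 / (1 - r) :=
        geom_sum_Ico_le_of_lt_one h0 (by linarith)
    _ ≤ 4 * r ^ 2 := by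
        rw [div_le_iff₀ (by linarith)]
        nlinarith [sq_nonneg r]

lemma pow_mul_rpow_le_mul_rpow_pow {m x y s : ℝ} (j : ℕ) (hm : 0 ≤ m) (hx : 0 ≤ x)
    (hxy : x ≤ y) (hs : 0 ≤ s) : m ^ j * x ^ (j * s) ≤ (m * y ^ s) ^ j := by
  calc m ^ j * x ^ (j * s) ≤ m ^ j * y ^ (j * s) := by gcongr
    _ = (m * y ^ s) ^ j := by rw [mul_comm (j : ℝ), rpow_mul_natCast (hx.trans hxy), mul_pow]

lemma mul_mul_rpow_le_rpow {m a b s : ℝ} (hm : 0 ≤ m) (ha : 0 ≤ a) (hb : 0 ≤ b)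
    (h : a ^ s ≤ 1 / m) : m * (a * b) ^ s ≤ b ^ s := by
  have hma : m * a ^ s ≤ 1 :=
    (mul_le_mul_of_nonneg_left h hm).trans (by rw [mul_one_div]; exact div_self_le_one m)
  calc m * (a * b) ^ s = (m * a ^ s) * b ^ s := by rw [mul_rpow ha hb, mul_assoc]
    _ ≤ b ^ s := mul_le_of_le_one_left (by positivity) hma

theorem stmt5_general (m t k : ℕ) (hk : 2 ≤ k)
    (h : (Real.exp 1 / 3) ^ ((k : ℝ) / 2) ≤ 1 / (m : ℝ)) :
    ∑ j ∈ Finset.Icc 2 t,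
        (m : ℝ) ^ j * (Real.exp 1 * j / (4 * t)) ^ (((j * k : ℕ) : ℝ) / 2) ≤
      4 * (3 / 4 : ℝ) ^ k := by
  set r : ℝ := (3 / 4 : ℝ) ^ ((k : ℝ) / 2)
  have hr0 : 0 ≤ r := by positivity
  have hr : r ≤ 3 / 4 := by
    have hk2 : (1 : ℝ) ≤ k / 2 := by
      rw [le_div_iff₀ two_pos, one_mul]; exact_mod_cast hk
    simpa using rpow_le_rpow_of_exponent_ge (x := (3 / 4 : ℝ)) (by norm_num) (by norm_num) hk2
  have hmr : (m : ℝ) * (exp 1 / 4) ^ ((k : ℝ) / 2) ≤ r := by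
    have := mul_mul_rpow_le_rpow (b := 3 / 4) (by positivity) (by positivity) (by norm_num) h
    rwa [show exp 1 / 3 * (3 / 4) = exp 1 / 4 by ring] at this
  have hterm : ∀ j ∈ Icc 2 t,
      (m : ℝ) ^ j * (exp 1 * j / (4 * t)) ^ (((j * k : ℕ) : ℝ) / 2) ≤ r ^ j := by
    intro j hj
    obtain ⟨h2j, hjt⟩ := mem_Icc.1 hj
    have hbase : exp 1 * j / (4 * t) ≤ exp 1 / 4 := by
      rw [div_le_div_iff₀ (by norm_cast; omega) (by norm_num)]
      have : (j : ℝ) ≤ t := by exact_mod_cast hjt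
      nlinarith [exp_pos 1]
    rw [show ((j * k : ℕ) : ℝ) / 2 = j * ((k : ℝ) / 2) by push_cast; ring]
    exact (pow_mul_rpow_le_mul_rpow_pow j (by positivity) (by positivity) hbase (by positivity)).trans
      (pow_le_pow_left₀ (by positivity) hmr j)
  calc _ ≤ ∑ j ∈ Icc 2 t, r ^ j := sum_le_sum hterm
    _ ≤ 4 * r ^ 2 := sum_Icc_two_pow_le_four_mul_sq_s5 hr0 hr t
    _ = 4 * (3 / 4 : ℝ) ^ k := by
        rw [← rpow_mul_natCast (by norm_num), show (k : ℝ) / 2 * (2 : ℕ) = k by push_cast; ring,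
          rpow_natCast]

/-- Analytic inequality: if `(e/3)^{k/2} ≤ 1/m`, `m ≥ 1`, `t ≥ 2`,
`k ≥ 2`, then `Σ_{j=2}^{t} m^j · (e·j/(4t))^{j·k/2} ≤ 4·(3/4)^k`. -/
theorem stmt5 (m t k : ℕ) (hm : 1 ≤ m) (ht : 2 ≤ t) (hk : 2 ≤ k)
    (h : (Real.exp 1 / 3) ^ ((k : ℝ) / 2) ≤ 1 / (m : ℝ)) :
    ∑ j ∈ Finset.Icc 2 t,
        (m : ℝ) ^ j * (Real.exp 1 * j / (4 * t)) ^ (((j * k : ℕ) : ℝ) / 2) ≤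
      4 * (3 / 4 : ℝ) ^ k :=
  stmt5_general m t k hk h
end

section
/- Fix positive integers n, m, k, t and q ≥ 2, a matrix A over ℤ/qℤ of size n×m, and functions r_1,…,r_k : {1,…,m} → {1,…,2t}. Let X_0, X_1 ⊆ {1,…,m} be finite sets whose symmetric difference D := X_0 △ X_1 is nonempty, and suppose that for every nonempty subset T ⊆ D there exist x ∈ T and i ∈ {1,…,k} such that r_i(x) ≠ r_i(y) for all y ∈ T \ {x}. Then there exists an enumeration x_1,…,x_n of D (with n = |D|) such that for every j ∈ {1,…,n}, writing X_b^{(j)} := X_b \ {x_1,…,x_{j−1}} for b ∈ {0,1}, there is some i ∈ {1,…,k} for which the cell (i, r_i(x_j)) of the matrix Enc(X_0^{(j)}) − Enc(X_1^{(j)}) equals A e_{x_j} if x_j ∈ X_0 and equals −A e_{x_j} if x_j ∈ X_1. -/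
/-!
Peel `D = X₀ △ X₁` greedily: the hypothesis, applied to the part of `D` not yet peeled, supplies
the next element `x_j` together with a hash `r_i` under which `x_j` shares its bucket with no other
remaining element. In `Enc(X₀⁽ʲ⁾) − Enc(X₁⁽ʲ⁾)` the elements common to both sides cancel, so the
cell `(i, r_i(x_j))` sees only the remaining elements of `D` in that bucket, that is `x_j` alone,
with sign `+` or `−` according to the side it lies on.
-/

/-- The IBLT-style encoding: `Enc A r X` is the `k × 2t` array over `(ℤ/qℤ)ⁿ`
whose `(i,j)` cell is `Σ_{x ∈ X, rᵢ(x) = j} A e_x` (column sums of `A`). -/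
noncomputable def Enc {n m k t q : ℕ} (A : Matrix (Fin n) (Fin m) (ZMod q))
    (r : Fin k → Fin m → Fin (2 * t)) (X : Finset (Fin m))
    (i : Fin k) (j : Fin (2 * t)) : Fin n → ZMod q :=
  ∑ x ∈ X.filter (fun x => r i x = j), (fun a => A a x)

open Finset

theorem Fin.image_cons_filter_lt_succ {α : Type*} [DecidableEq α] {N : ℕ} (x : α)
    (f : Fin N → α) (j : Fin N) :
    (univ.filter (· < j.succ)).image (Fin.cons x f : Fin (N + 1) → α) =
      insert x ((univ.filter (· < j)).image f) := by
  ext y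
  simp [Fin.exists_fin_succ, eq_comm]

theorem Fin.apply_notMem_image_filter_lt {α : Type*} [DecidableEq α] {N : ℕ} {f : Fin N → α}
    (hf : Function.Injective f) (j : Fin N) :
    f j ∉ (univ.filter (· < j)).image f := by
  simp [hf.eq_iff]

theorem exists_enumeration_good_on_remaining {α : Type*} [DecidableEq α]
    (Good : Finset α → α → Prop) (N : ℕ) (D : Finset α) (hcard : D.card = N)
    (hgood : ∀ T ⊆ D, T.Nonempty → ∃ x ∈ T, Good T x) :
    ∃ f : Fin N → α, Function.Injective f ∧ univ.image f = D ∧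
      ∀ j, Good (D \ (univ.filter (· < j)).image f) (f j) := by
  induction N generalizing D with
  | zero =>
    obtain rfl := card_eq_zero.mp hcard
    exact ⟨Fin.elim0, Function.injective_of_subsingleton _, by simp, fun j => j.elim0⟩
  | succ N ih =>
    obtain ⟨x, hxD, hx⟩ := hgood D Subset.rfl (card_pos.mp (by omega))
    obtain ⟨f, hf, hfD, hfgood⟩ := ih (D.erase x) (by rw [card_erase_of_mem hxD, hcard]; rfl)
      fun T hT => hgood T (hT.trans (erase_subset x D))
    have hxf : x ∉ Set.range f := by
      rintro ⟨j, rfl⟩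
      have hj := hfD ▸ mem_image_of_mem f (mem_univ j)
      simp at hj
    refine ⟨Fin.cons x f, Fin.cons_injective_iff.mpr ⟨hxf, hf⟩, ?_, ?_⟩
    · conv_rhs => rw [← insert_erase hxD, ← hfD]
      ext y
      simp [Fin.exists_fin_succ, eq_comm]
    · refine Fin.cases (by simpa using hx) fun j => ?_
      rw [Fin.image_cons_filter_lt_succ, sdiff_insert, ← erase_sdiff_comm, Fin.cons_succ]
      exact hfgood j

theorem filter_sdiff_filter_eq_of_isolated {α β : Type*} [DecidableEq α] [DecidableEq β]
    {g : α → β} {Y Z : Finset α} {x : α} (hiso : ∀ y ∈ Y \ Z, y ≠ x → g x ≠ g y) :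
    Y.filter (g · = g x) \ Z.filter (g · = g x) = if x ∈ Y \ Z then {x} else ∅ := by
  ext y
  have := hiso y
  grind

theorem enc_sub_enc_eq_ite_of_isolated {n m k t q : ℕ} (A : Matrix (Fin n) (Fin m) (ZMod q))
    (r : Fin k → Fin m → Fin (2 * t)) {X0 X1 : Finset (Fin m)} {x : Fin m} {i : Fin k}
    (hx : x ∈ (X0 \ X1) ∪ (X1 \ X0))
    (hiso : ∀ y ∈ (X0 \ X1) ∪ (X1 \ X0), y ≠ x → r i x ≠ r i y) :
    Enc A r X0 i (r i x) - Enc A r X1 i (r i x) =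
      if x ∈ X0 then (fun a => A a x) else (fun a => -A a x) := by
  rw [Enc, Enc, ← sum_sdiff_sub_sum_sdiff,
    filter_sdiff_filter_eq_of_isolated fun y hy => hiso y (mem_union_left _ hy),
    filter_sdiff_filter_eq_of_isolated fun y hy => hiso y (mem_union_right _ hy)]
  by_cases hx0 : x ∈ X0
  · have hx1 : x ∉ X1 := by simp_all
    simp [hx0, hx1]
  · have hx1 : x ∈ X1 := by simp_all
    simp [hx0, hx1]
    rfl

theorem stmt11_general (n m k t q : ℕ)
    (A : Matrix (Fin n) (Fin m) (ZMod q)) (r : Fin k → Fin m → Fin (2 * t))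
    (X0 X1 : Finset (Fin m))
    (hpeel : ∀ T ⊆ (X0 \ X1) ∪ (X1 \ X0), T.Nonempty →
      ∃ x ∈ T, ∃ i : Fin k, ∀ y ∈ T, y ≠ x → r i x ≠ r i y) :
    ∃ f : Fin ((X0 \ X1) ∪ (X1 \ X0)).card → Fin m,
      Function.Injective f ∧
      Finset.image f Finset.univ = (X0 \ X1) ∪ (X1 \ X0) ∧
      ∀ j : Fin ((X0 \ X1) ∪ (X1 \ X0)).card, ∃ i : Fin k,
        Enc A r (X0 \ (Finset.univ.filter (fun l => l < j)).image f) i (r i (f j)) -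
          Enc A r (X1 \ (Finset.univ.filter (fun l => l < j)).image f) i (r i (f j)) =
        if f j ∈ X0 then (fun a => A a (f j)) else (fun a => -A a (f j)) := by
  set D := (X0 \ X1) ∪ (X1 \ X0)
  obtain ⟨f, hf, hfD, hgood⟩ := exists_enumeration_good_on_remaining
    (fun T x => ∃ i, ∀ y ∈ T, y ≠ x → r i x ≠ r i y) _ D rfl hpeel
  refine ⟨f, hf, hfD, fun j => ?_⟩
  obtain ⟨i, hi⟩ := hgood j
  set P := (univ.filter (· < j)).image f
  have hjP : f j ∉ P := Fin.apply_notMem_image_filter_lt hf j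
  have hjD : f j ∈ D := hfD ▸ mem_image_of_mem f (mem_univ j)
  have hremaining : ((X0 \ P) \ (X1 \ P)) ∪ ((X1 \ P) \ (X0 \ P)) = D \ P := by
    ext y
    simp only [D, mem_union, mem_sdiff]
    tauto
  refine ⟨i, ?_⟩
  rw [enc_sub_enc_eq_ite_of_isolated A r (hremaining ▸ mem_sdiff.mpr ⟨hjD, hjP⟩) (hremaining ▸ hi)]
  simp [hjP]

/-- If every nonempty subset of the (nonempty) symmetric difference
`D = X₀ △ X₁` contains an element isolated under some hash function, then `D` can
be enumerated as `x₁,…,x_n` such that at each step `j` some cell `(i, rᵢ(x_j))` of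
`Enc(X₀⁽ʲ⁾) − Enc(X₁⁽ʲ⁾)` (where `X_b⁽ʲ⁾ = X_b \ {x₁,…,x_{j−1}}`) equals exactly
`A e_{x_j}` if `x_j ∈ X₀`, and `−A e_{x_j}` if `x_j ∈ X₁`. -/
theorem stmt11 (n m k t q : ℕ) (hn : 0 < n) (hm : 0 < m) (hk : 0 < k) (ht : 0 < t)
    (hq : 2 ≤ q)
    (A : Matrix (Fin n) (Fin m) (ZMod q)) (r : Fin k → Fin m → Fin (2 * t))
    (X0 X1 : Finset (Fin m))
    (hD : ((X0 \ X1) ∪ (X1 \ X0)).Nonempty)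
    (hpeel : ∀ T ⊆ (X0 \ X1) ∪ (X1 \ X0), T.Nonempty →
      ∃ x ∈ T, ∃ i : Fin k, ∀ y ∈ T, y ≠ x → r i x ≠ r i y) :
    ∃ f : Fin ((X0 \ X1) ∪ (X1 \ X0)).card → Fin m,
      Function.Injective f ∧
      Finset.image f Finset.univ = (X0 \ X1) ∪ (X1 \ X0) ∧
      ∀ j : Fin ((X0 \ X1) ∪ (X1 \ X0)).card, ∃ i : Fin k,
        Enc A r (X0 \ (Finset.univ.filter (fun l => l < j)).image f) i (r i (f j)) -
          Enc A r (X1 \ (Finset.univ.filter (fun l => l < j)).image f) i (r i (f j)) =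
        if f j ∈ X0 then (fun a => A a (f j)) else (fun a => -A a (f j)) :=
  stmt11_general n m k t q A r X0 X1 hpeel
end
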